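/- arXiv:2205.02634 — 2 statements merged into one kernel-verified Lean document; each statement's English description precedes it below -/
import Mathlib

section
/- Let G_1, G_2, G_3 be pairwise disjoint connected graphs with chosen vertices x_i ∈ V(G_i), and let B(G_1,G_2,G_3) be the bouquet obtained by identifying x_1, x_2, x_3 into a single vertex. Then γ_sp(G_1) + γ_sp(G_2) + γ_sp(G_3) − 2 ≤ γ_sp(B(G_1,G_2,G_3)) ≤ γ_sp(G_1) + γ_sp(G_2) + γ_sp(G_3). -/
/-- `S` is a super dominating set of `G`: it is dominating, and for every `u ∉ S`
there is `v ∈ S` whose neighbours outside `S` are exactly `{u}`. -/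
def IsSuperDominatingSet {V : Type*} (G : SimpleGraph V) (S : Finset V) : Prop :=
  (∀ u ∉ S, ∃ v ∈ S, G.Adj v u) ∧
  ∀ u ∉ S, ∃ v ∈ S, ∀ w, (G.Adj v w ∧ w ∉ S) ↔ w = u

/-- The super domination number of `G`. -/
noncomputable def superDominationNumber {V : Type*} [Fintype V] (G : SimpleGraph V) : ℕ :=
  sInf {n | ∃ S : Finset V, IsSuperDominatingSet G S ∧ S.card = n}

/-- The bouquet `B(G₁,…,Gₙ)` of the graphs `G i` with respect to the vertices
`x i ∈ V(G i)`: the one-point union identifying all the `x i` into the single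
common vertex `none`. -/
def bouquet {n : ℕ} {V : Fin n → Type*} (G : ∀ i, SimpleGraph (V i))
    (x : ∀ i, V i) : SimpleGraph (Option (Σ i : Fin n, {v : V i // v ≠ x i})) :=
  SimpleGraph.fromRel (fun u w =>
    match u, w with
    | none, some b => (G b.1).Adj (x b.1) b.2.1
    | some b, some b' => ∃ h : b.1 = b'.1, (G b'.1).Adj (h ▸ b.2.1) b'.2.1
    | _, _ => False)

set_option linter.unusedSectionVars false

section bouquetlemmas
variable {n : ℕ} {V : Fin n → Type*} (G : ∀ i, SimpleGraph (V i)) (x : ∀ i, V i)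

lemma adj_none_some {j : Fin n} {b : V j} {hb : b ≠ x j} :
    (bouquet G x).Adj none (some ⟨j, ⟨b, hb⟩⟩) ↔ (G j).Adj (x j) b := by
  simp [bouquet, SimpleGraph.fromRel_adj]

lemma adj_some_same {j : Fin n} {a b : V j} {ha : a ≠ x j} {hb : b ≠ x j} :
    (bouquet G x).Adj (some ⟨j, ⟨a, ha⟩⟩) (some ⟨j, ⟨b, hb⟩⟩) ↔ (G j).Adj a b := by
  simp only [bouquet, SimpleGraph.fromRel_adj]
  constructor
  · rintro ⟨hne, ⟨-, hadj⟩ | ⟨-, hadj⟩⟩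
    · exact hadj
    · exact hadj.symm
  · intro h
    refine ⟨?_, Or.inl ⟨trivial, h⟩⟩
    intro hEq
    have h2 := Option.some.inj hEq
    injection h2 with h3 h4
    exact (G j).ne_of_adj h ((Subtype.mk.injEq _ _ _ _).mp h4)

lemma adj_some_branch {i j : Fin n} {a : {v : V i // v ≠ x i}} {b : {v : V j // v ≠ x j}}
    (h : (bouquet G x).Adj (some ⟨i, a⟩) (some ⟨j, b⟩)) : i = j := by
  obtain ⟨-, ⟨h, -⟩ | ⟨h, -⟩⟩ := h
  · exact h
  · exact h.symm

lemma adj_some_none {j : Fin n} {b : V j} {hb : b ≠ x j} :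
    (bouquet G x).Adj (some ⟨j, ⟨b, hb⟩⟩) none ↔ (G j).Adj (x j) b := by
  rw [SimpleGraph.adj_comm]; exact adj_none_some G x


lemma neighbor_shape {j : Fin n} {s : {v : V j // v ≠ x j}}
    {w : Option (Σ i : Fin n, {v : V i // v ≠ x i})}
    (h : (bouquet G x).Adj w (some ⟨j, s⟩)) :
    w = none ∨ ∃ (y : V j) (hy : y ≠ x j), w = some ⟨j, ⟨y, hy⟩⟩ := by
  match w with
  | none => exact Or.inl rfl
  | some ⟨k, t⟩ =>
    have hk := adj_some_branch G x h
    subst hk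
    exact Or.inr ⟨t.1, t.2, rfl⟩

lemma some_mk_inj {j : Fin n} {a b : V j} {ha : a ≠ x j} {hb : b ≠ x j}
    (h : (some ⟨j, ⟨a, ha⟩⟩ : Option (Σ i : Fin n, {v : V i // v ≠ x i}))
       = some ⟨j, ⟨b, hb⟩⟩) : a = b := by
  have h2 := Option.some.inj h
  injection h2 with h3 h4
  exact (Subtype.mk.injEq _ _ _ _).mp h4

end bouquetlemmas

section lower
variable {n : ℕ} {V : Fin n → Type*} [∀ i, Fintype (V i)] [∀ i, DecidableEq (V i)]
  (G : ∀ i, SimpleGraph (V i)) (x : ∀ i, V i)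

noncomputable def bIota (j : Fin n) (v : V j) :
    Option (Σ i : Fin n, {v : V i // v ≠ x i}) :=
  if h : v = x j then none else some ⟨j, ⟨v, h⟩⟩

lemma bIota_eq_none_iff {j : Fin n} {v : V j} : bIota x j v = none ↔ v = x j := by
  by_cases h : v = x j
  · simp [bIota, h]
  · simp [bIota, dif_neg h, h]

lemma bIota_of_ne {j : Fin n} {v : V j} (h : v ≠ x j) :
    bIota x j v = some ⟨j, ⟨v, h⟩⟩ := dif_neg h

lemma bIota_some_branch {i j : Fin n} {v : V i} {s : {w : V j // w ≠ x j}}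
    (h : bIota x i v = some ⟨j, s⟩) : i = j := by
  by_cases hv : v = x i
  · rw [bIota, dif_pos hv] at h; exact absurd h (by simp)
  · rw [bIota, dif_neg hv] at h
    exact congrArg Sigma.fst (Option.some.inj h)

lemma bIota_injective (j : Fin n) : Function.Injective (bIota x j) := by
  intro a b h
  by_cases ha : a = x j <;> by_cases hb : b = x j
  · rw [ha, hb]
  · rw [bIota, dif_pos ha, bIota, dif_neg hb] at h; exact absurd h (by simp)
  · rw [bIota, dif_neg ha, bIota, dif_pos hb] at h; exact absurd h (by simp)
  · rw [bIota_of_ne x ha, bIota_of_ne x hb] at h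
    exact some_mk_inj x h

variable (D : Finset (Option (Σ i : Fin n, {v : V i // v ≠ x i})))

/-- Trace of `D` on branch `j`. -/
noncomputable def brTrace (j : Fin n) : Finset (V j) := by
  classical
  exact Finset.univ.filter (fun v => bIota x j v ∈ D)

lemma mem_brTrace {j : Fin n} {v : V j} : v ∈ brTrace x D j ↔ bIota x j v ∈ D := by
  classical
  simp [brTrace]

lemma x_mem_brTrace {j : Fin n} : x j ∈ brTrace x D j ↔ none ∈ D := by
  rw [mem_brTrace, bIota, dif_pos rfl]

lemma mem_brTrace_of_ne {j : Fin n} {v : V j} (hv : v ≠ x j) :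
    v ∈ brTrace x D j ↔ (some ⟨j, ⟨v, hv⟩⟩ ∈ D) := by
  rw [mem_brTrace, bIota_of_ne x hv]

variable {G x D}

/-- Lower bound, case `none ∈ D`. -/
lemma lower_sp_of_none_mem (hD : IsSuperDominatingSet (bouquet G x) D)
    (hn : none ∈ D) (j : Fin n) : IsSuperDominatingSet (G j) (brTrace x D j) := by
  have hxj : x j ∈ brTrace x D j := (x_mem_brTrace x D).mpr hn
  constructor
  · intro u hu
    have hux : u ≠ x j := fun h => hu (h ▸ hxj)
    have huD : (some ⟨j, ⟨u, hux⟩⟩ : Option _) ∉ D :=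
      fun h => hu ((mem_brTrace_of_ne x D hux).mpr h)
    obtain ⟨w, hwD, hadj⟩ := hD.1 _ huD
    rcases neighbor_shape G x hadj with rfl | ⟨y, hy, rfl⟩
    · exact ⟨x j, hxj, (adj_none_some G x).mp hadj⟩
    · exact ⟨y, (mem_brTrace_of_ne x D hy).mpr hwD, (adj_some_same G x).mp hadj⟩
  · intro u hu
    have hux : u ≠ x j := fun h => hu (h ▸ hxj)
    have huD : (some ⟨j, ⟨u, hux⟩⟩ : Option _) ∉ D :=
      fun h => hu ((mem_brTrace_of_ne x D hux).mpr h)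
    obtain ⟨w, hwD, hwP⟩ := hD.2 _ huD
    have hwadj := ((hwP _).mpr rfl).1
    rcases neighbor_shape G x hwadj with rfl | ⟨y, hy, rfl⟩
    · refine ⟨x j, hxj, ?_⟩
      intro z
      constructor
      · rintro ⟨hadj, hz⟩
        have hzx : z ≠ x j := fun h => hz (h ▸ hxj)
        have hzD : (some ⟨j, ⟨z, hzx⟩⟩ : Option _) ∉ D :=
          fun h => hz ((mem_brTrace_of_ne x D hzx).mpr h)
        have := (hwP _).mp ⟨(adj_none_some G x).mpr hadj, hzD⟩
        exact some_mk_inj x this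
      · rintro rfl
        exact ⟨(adj_none_some G x).mp hwadj, hu⟩
    · refine ⟨y, (mem_brTrace_of_ne x D hy).mpr hwD, ?_⟩
      intro z
      constructor
      · rintro ⟨hadj, hz⟩
        have hzx : z ≠ x j := fun h => hz (h ▸ hxj)
        have hzD : (some ⟨j, ⟨z, hzx⟩⟩ : Option _) ∉ D :=
          fun h => hz ((mem_brTrace_of_ne x D hzx).mpr h)
        have := (hwP _).mp ⟨(adj_some_same G x).mpr hadj, hzD⟩
        exact some_mk_inj x this
      · rintro rfl
        exact ⟨(adj_some_same G x).mp hwadj, hu⟩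

/-- Lower bound, case `none ∉ D`, generic branch with `x j` added. -/
lemma lower_sp_insert (hD : IsSuperDominatingSet (bouquet G x) D)
    (hn : none ∉ D) (j : Fin n) :
    IsSuperDominatingSet (G j) (insert (x j) (brTrace x D j)) := by
  constructor
  · intro u hu
    have hux : u ≠ x j := fun h => hu (h ▸ Finset.mem_insert_self _ _)
    have huT : u ∉ brTrace x D j := fun h => hu (Finset.mem_insert_of_mem h)
    have huD : (some ⟨j, ⟨u, hux⟩⟩ : Option _) ∉ D :=
      fun h => huT ((mem_brTrace_of_ne x D hux).mpr h)
    obtain ⟨w, hwD, hadj⟩ := hD.1 _ huD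
    rcases neighbor_shape G x hadj with rfl | ⟨y, hy, rfl⟩
    · exact absurd hwD hn
    · exact ⟨y, Finset.mem_insert_of_mem ((mem_brTrace_of_ne x D hy).mpr hwD),
        (adj_some_same G x).mp hadj⟩
  · intro u hu
    have hux : u ≠ x j := fun h => hu (h ▸ Finset.mem_insert_self _ _)
    have huT : u ∉ brTrace x D j := fun h => hu (Finset.mem_insert_of_mem h)
    have huD : (some ⟨j, ⟨u, hux⟩⟩ : Option _) ∉ D :=
      fun h => huT ((mem_brTrace_of_ne x D hux).mpr h)
    obtain ⟨w, hwD, hwP⟩ := hD.2 _ huD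
    have hwadj := ((hwP _).mpr rfl).1
    rcases neighbor_shape G x hwadj with rfl | ⟨y, hy, rfl⟩
    · exact absurd hwD hn
    · refine ⟨y, Finset.mem_insert_of_mem ((mem_brTrace_of_ne x D hy).mpr hwD), ?_⟩
      intro z
      constructor
      · rintro ⟨hadj, hz⟩
        have hzx : z ≠ x j := fun h => hz (h ▸ Finset.mem_insert_self _ _)
        have hzD : (some ⟨j, ⟨z, hzx⟩⟩ : Option _) ∉ D :=
          fun h => hz (Finset.mem_insert_of_mem ((mem_brTrace_of_ne x D hzx).mpr h))
        have := (hwP _).mp ⟨(adj_some_same G x).mpr hadj, hzD⟩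
        exact some_mk_inj x this
      · rintro rfl
        exact ⟨(adj_some_same G x).mp hwadj, hu⟩

/-- Lower bound, case `none ∉ D`, the special branch hosting the witness of `none`. -/
lemma lower_sp_special (hD : IsSuperDominatingSet (bouquet G x) D)
    (hn : none ∉ D) {i₀ : Fin n} {y₀ : V i₀} {hy₀ : y₀ ≠ x i₀}
    (hw₀D : (some ⟨i₀, ⟨y₀, hy₀⟩⟩ : Option (Σ i : Fin n, {v : V i // v ≠ x i})) ∈ D)
    (hw₀P : ∀ z, ((bouquet G x).Adj (some ⟨i₀, ⟨y₀, hy₀⟩⟩) z ∧ z ∉ D) ↔ z = none) :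
    IsSuperDominatingSet (G i₀) (brTrace x D i₀) := by
  have hy₀T : y₀ ∈ brTrace x D i₀ := (mem_brTrace_of_ne x D hy₀).mpr hw₀D
  have hadj₀ : (G i₀).Adj (x i₀) y₀ :=
    (adj_some_none G x).mp ((hw₀P none).mpr rfl).1
  have hxT : x i₀ ∉ brTrace x D i₀ := fun h => hn ((x_mem_brTrace x D).mp h)
  constructor
  · intro u hu
    by_cases hux : u = x i₀
    · subst hux
      exact ⟨y₀, hy₀T, hadj₀.symm⟩
    · have huD : (some ⟨i₀, ⟨u, hux⟩⟩ : Option _) ∉ D :=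
        fun h => hu ((mem_brTrace_of_ne x D hux).mpr h)
      obtain ⟨w, hwD, hadj⟩ := hD.1 _ huD
      rcases neighbor_shape G x hadj with rfl | ⟨y, hy, rfl⟩
      · exact absurd hwD hn
      · exact ⟨y, (mem_brTrace_of_ne x D hy).mpr hwD, (adj_some_same G x).mp hadj⟩
  · intro u hu
    by_cases hux : u = x i₀
    · subst hux
      refine ⟨y₀, hy₀T, ?_⟩
      intro z
      constructor
      · rintro ⟨hadj, hz⟩
        by_cases hzx : z = x i₀
        · exact hzx
        · have hzD : (some ⟨i₀, ⟨z, hzx⟩⟩ : Option _) ∉ D :=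
            fun h => hz ((mem_brTrace_of_ne x D hzx).mpr h)
          have := (hw₀P _).mp ⟨(adj_some_same G x).mpr hadj, hzD⟩
          exact absurd this (by simp)
      · rintro rfl
        exact ⟨hadj₀.symm, hxT⟩
    · have huD : (some ⟨i₀, ⟨u, hux⟩⟩ : Option _) ∉ D :=
        fun h => hu ((mem_brTrace_of_ne x D hux).mpr h)
      obtain ⟨w, hwD, hwP⟩ := hD.2 _ huD
      have hwadj := ((hwP _).mpr rfl).1
      rcases neighbor_shape G x hwadj with rfl | ⟨y, hy, rfl⟩
      · exact absurd hwD hn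
      · refine ⟨y, (mem_brTrace_of_ne x D hy).mpr hwD, ?_⟩
        intro z
        constructor
        · rintro ⟨hadj, hz⟩
          by_cases hzx : z = x i₀
          · have hadj2 : (G i₀).Adj (x i₀) y := by rw [← hzx]; exact hadj.symm
            have := (hwP none).mp ⟨(adj_some_none G x).mpr hadj2, hn⟩
            exact absurd this (by simp)
          · have hzD : (some ⟨i₀, ⟨z, hzx⟩⟩ : Option _) ∉ D :=
              fun h => hz ((mem_brTrace_of_ne x D hzx).mpr h)
            have := (hwP _).mp ⟨(adj_some_same G x).mpr hadj, hzD⟩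
            exact some_mk_inj x this
        · rintro rfl
          exact ⟨(adj_some_same G x).mp hwadj, hu⟩
end lower



section basics
variable {V : Type*} [Fintype V] [DecidableEq V] {G : SimpleGraph V}

lemma sp_univ (G : SimpleGraph V) : IsSuperDominatingSet G (Finset.univ) := by
  constructor <;> intro u hu <;> exact absurd (Finset.mem_univ u) hu

lemma sdn_nonempty (G : SimpleGraph V) :
    {n | ∃ S : Finset V, IsSuperDominatingSet G S ∧ S.card = n}.Nonempty :=
  ⟨_, Finset.univ, sp_univ G, rfl⟩

lemma sdn_le {S : Finset V} (h : IsSuperDominatingSet G S) :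
    superDominationNumber G ≤ S.card := Nat.sInf_le ⟨S, h, rfl⟩

lemma sdn_exists (G : SimpleGraph V) :
    ∃ S : Finset V, IsSuperDominatingSet G S ∧ S.card = superDominationNumber G :=
  Nat.sInf_mem (sdn_nonempty G)

/-- Key lemma: there is a minimum super dominating set `E` such that either `x ∉ E`, or
every vertex outside `E` has a witness different from `x`. -/
lemma exists_good_sp (G : SimpleGraph V) (x : V) :
    ∃ E : Finset V, IsSuperDominatingSet G E ∧ E.card = superDominationNumber G ∧
      (x ∉ E ∨ ∀ u ∉ E, ∃ y ∈ E, y ≠ x ∧ ∀ w, (G.Adj y w ∧ w ∉ E) ↔ w = u) := by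
  classical
  obtain ⟨D, hD, hDcard⟩ := sdn_exists G
  by_cases hav : ∀ u ∉ D, ∃ y ∈ D, y ≠ x ∧ ∀ w, (G.Adj y w ∧ w ∉ D) ↔ w = u
  · exact ⟨D, hD, hDcard, Or.inr hav⟩
  push_neg at hav
  obtain ⟨u₀, hu₀, hbad⟩ := hav
  set f : V → V := fun u => if hu : u ∉ D then (hD.2 u hu).choose else u with hf
  have hfD : ∀ u ∉ D, f u ∈ D := by
    intro u hu; simp only [hf, dif_pos hu]; exact (hD.2 u hu).choose_spec.1
  have hfP : ∀ u (hu : u ∉ D), ∀ w, (G.Adj (f u) w ∧ w ∉ D) ↔ w = u := by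
    intro u hu; simp only [hf, dif_pos hu]; exact (hD.2 u hu).choose_spec.2
  have hfadj : ∀ u (hu : u ∉ D), G.Adj (f u) u := fun u hu => ((hfP u hu u).mpr rfl).1
  have hfx : f u₀ = x := by
    by_contra hne
    obtain ⟨w, hw | hw⟩ := hbad (f u₀) (hfD u₀ hu₀) hne
    · exact hw.2 ((hfP u₀ hu₀ w).mp hw.1)
    · obtain ⟨himp, heq⟩ := hw
      rw [heq] at himp
      exact hu₀ (himp (hfadj u₀ hu₀))
  set Out : Finset V := Finset.univ.filter (fun u => u ∉ D) with hOut
  have hmemOut : ∀ u, u ∈ Out ↔ u ∉ D := by intro u; simp [hOut]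
  set F : Finset V := Out.image f with hF
  have hmemF : ∀ w, w ∈ F ↔ ∃ u, u ∉ D ∧ f u = w := by
    intro w
    simp only [hF, Finset.mem_image]
    constructor
    · rintro ⟨u, hu, rfl⟩; exact ⟨u, (hmemOut u).mp hu, rfl⟩
    · rintro ⟨u, hu, rfl⟩; exact ⟨u, (hmemOut u).mpr hu, rfl⟩
  have hFD : F ⊆ D := by
    intro w hw
    obtain ⟨u, hu, rfl⟩ := (hmemF w).mp hw
    exact hfD u hu
  have hinj : Set.InjOn f Out := by
    intro a ha b hb hab
    have h1 := (hfP a ((hmemOut a).mp ha) a).mpr rfl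
    exact (hfP b ((hmemOut b).mp hb) a).mp ⟨hab ▸ h1.1, h1.2⟩
  have hFcard : F.card = Out.card := Finset.card_image_of_injOn hinj
  set E : Finset V := Finset.univ \ F with hE
  have hmemE : ∀ w, w ∈ E ↔ w ∉ F := by intro w; simp [hE]
  have hEcard : E.card = D.card := by
    have h1 : Out.card + D.card = Fintype.card V := by
      have h2 : Out = Finset.univ \ D := by ext u; simp [hOut]
      have h3 := Finset.card_le_univ D
      rw [h2, Finset.card_sdiff_of_subset (Finset.subset_univ D), Finset.card_univ]
      omega
    have h4 : E.card = Fintype.card V - F.card := by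
      rw [hE, Finset.card_sdiff_of_subset (Finset.subset_univ F), Finset.card_univ]
    have h5 := Finset.card_le_univ F
    omega
  have hOutE : ∀ u, u ∉ D → u ∈ E := by
    intro u hu
    rw [hmemE]
    intro huF
    exact hu (hFD huF)
  have hsp : IsSuperDominatingSet G E := by
    constructor
    · intro w hw
      rw [hmemE, not_not] at hw
      obtain ⟨u, hu, rfl⟩ := (hmemF w).mp hw
      exact ⟨u, hOutE u hu, (hfadj u hu).symm⟩
    · intro w hw
      rw [hmemE, not_not] at hw
      obtain ⟨u, hu, rfl⟩ := (hmemF w).mp hw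
      refine ⟨u, hOutE u hu, ?_⟩
      intro z
      constructor
      · rintro ⟨hadj, hz⟩
        rw [hmemE, not_not] at hz
        obtain ⟨u', hu', rfl⟩ := (hmemF z).mp hz
        have := (hfP u' hu' u).mp ⟨hadj.symm, hu⟩
        rw [this]
      · rintro rfl
        refine ⟨(hfadj u hu).symm, ?_⟩
        rw [hmemE, not_not]
        exact (hmemF (f u)).mpr ⟨u, hu, rfl⟩
  refine ⟨E, hsp, by rw [hEcard, hDcard], Or.inl ?_⟩
  rw [hmemE, not_not]
  exact (hmemF x).mpr ⟨u₀, hu₀, hfx⟩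
end basics

section upper
variable {n : ℕ} {V : Fin n → Type*} [∀ i, Fintype (V i)] [∀ i, DecidableEq (V i)]
  (G : ∀ i, SimpleGraph (V i)) (x : ∀ i, V i)

lemma upper_bound (E : ∀ j, Finset (V j))
    (hsp : ∀ j, IsSuperDominatingSet (G j) (E j))
    (hgood : ∀ j, (x j ∉ E j ∨
      ∀ u ∉ E j, ∃ y ∈ E j, y ≠ x j ∧ ∀ w, ((G j).Adj y w ∧ w ∉ E j) ↔ w = u))
    (j₀ : Fin n) :
    ∃ D, IsSuperDominatingSet (bouquet G x) D ∧ D.card ≤ ∑ j, (E j).card := by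
  classical
  set D : Finset (Option (Σ i : Fin n, {v : V i // v ≠ x i})) :=
    Finset.univ.biUnion (fun j => (E j).image (bIota x j)) with hDdef
  have hsome : ∀ (j : Fin n) (v : V j) (hv : v ≠ x j),
      (some ⟨j, ⟨v, hv⟩⟩ ∈ D) ↔ v ∈ E j := by
    intro j v hv
    constructor
    · intro h
      obtain ⟨k, -, hk⟩ := Finset.mem_biUnion.mp h
      obtain ⟨u, hu, heq⟩ := Finset.mem_image.mp hk
      by_cases hxk : u = x k
      · rw [bIota, dif_pos hxk] at heq; exact absurd heq (by simp)
      · rw [bIota, dif_neg hxk] at heq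
        have h2 := Option.some.inj heq
        injection h2 with h3 h4
        subst h3
        have h5 := eq_of_heq h4
        have h6 := (Subtype.mk.injEq _ _ _ _).mp h5
        rwa [h6] at hu
    · intro h
      refine Finset.mem_biUnion.mpr ⟨j, Finset.mem_univ j, Finset.mem_image.mpr ⟨v, h, ?_⟩⟩
      rw [bIota, dif_neg hv]
  have hnone : none ∈ D ↔ ∃ j, x j ∈ E j := by
    constructor
    · intro h
      obtain ⟨k, -, hk⟩ := Finset.mem_biUnion.mp h
      obtain ⟨u, hu, heq⟩ := Finset.mem_image.mp hk
      by_cases hxk : u = x k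
      · exact ⟨k, hxk ▸ hu⟩
      · rw [bIota, dif_neg hxk] at heq; exact absurd heq (by simp)
    · rintro ⟨j, hj⟩
      refine Finset.mem_biUnion.mpr ⟨j, Finset.mem_univ j, Finset.mem_image.mpr ⟨x j, hj, ?_⟩⟩
      rw [bIota, dif_pos rfl]
  have hwitness : ∀ (j : Fin n) (w : V j), w ∉ E j →
      ∃ y, y ∈ E j ∧ y ≠ x j ∧ ∀ z, ((G j).Adj y z ∧ z ∉ E j) ↔ z = w := by
    intro j w hwE
    rcases hgood j with hxE | hav
    · obtain ⟨y, hyE, hyP⟩ := (hsp j).2 w hwE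
      exact ⟨y, hyE, fun h => hxE (h ▸ hyE), hyP⟩
    · obtain ⟨y, hyE, hyx, hyP⟩ := hav w hwE
      exact ⟨y, hyE, hyx, hyP⟩
  refine ⟨D, ⟨?_, ?_⟩, ?_⟩
  · -- domination
    intro u hu
    match u with
    | none =>
      have hxnot : x j₀ ∉ E j₀ := fun h => hu (hnone.mpr ⟨j₀, h⟩)
      obtain ⟨y, hyE, hyP⟩ := (hsp j₀).2 (x j₀) hxnot
      have hyx : y ≠ x j₀ := fun h => hxnot (h ▸ hyE)
      have hadj : (G j₀).Adj y (x j₀) := ((hyP (x j₀)).mpr rfl).1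
      exact ⟨some ⟨j₀, ⟨y, hyx⟩⟩, (hsome j₀ y hyx).mpr hyE,
        (adj_some_none G x).mpr hadj.symm⟩
    | some ⟨j, ⟨w, hw⟩⟩ =>
      have hwE : w ∉ E j := fun h => hu ((hsome j w hw).mpr h)
      obtain ⟨y, hyE, hyx, hyP⟩ := hwitness j w hwE
      exact ⟨some ⟨j, ⟨y, hyx⟩⟩, (hsome j y hyx).mpr hyE,
        (adj_some_same G x).mpr ((hyP w).mpr rfl).1⟩
  · -- witnesses
    intro u hu
    match u with
    | none =>
      have hxnot : x j₀ ∉ E j₀ := fun h => hu (hnone.mpr ⟨j₀, h⟩)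
      obtain ⟨y, hyE, hyP⟩ := (hsp j₀).2 (x j₀) hxnot
      have hyx : y ≠ x j₀ := fun h => hxnot (h ▸ hyE)
      refine ⟨some ⟨j₀, ⟨y, hyx⟩⟩, (hsome j₀ y hyx).mpr hyE, ?_⟩
      intro z
      constructor
      · rintro ⟨hadj, hz⟩
        match z with
        | none => rfl
        | some ⟨k, ⟨z', hz'⟩⟩ =>
          have hk := adj_some_branch G x hadj
          subst hk
          have hadj' := (adj_some_same G x).mp hadj
          have hz'E : z' ∉ E j₀ := fun h => hz ((hsome _ _ _).mpr h)
          exact absurd ((hyP z').mp ⟨hadj', hz'E⟩) hz'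
      · rintro rfl
        exact ⟨(adj_some_none G x).mpr (((hyP (x j₀)).mpr rfl).1.symm), hu⟩
    | some ⟨j, ⟨w, hw⟩⟩ =>
      have hwE : w ∉ E j := fun h => hu ((hsome j w hw).mpr h)
      obtain ⟨y, hyE, hyx, hyP⟩ := hwitness j w hwE
      refine ⟨some ⟨j, ⟨y, hyx⟩⟩, (hsome j y hyx).mpr hyE, ?_⟩
      intro z
      constructor
      · rintro ⟨hadj, hz⟩
        match z with
        | none =>
          have hxE : x j ∉ E j := fun h => hz (hnone.mpr ⟨j, h⟩)
          have hadj' := (adj_some_none G x).mp hadj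
          exact absurd ((hyP (x j)).mp ⟨hadj'.symm, hxE⟩).symm hw
        | some ⟨k, ⟨z', hz'⟩⟩ =>
          have hk := adj_some_branch G x hadj
          subst hk
          have hadj' := (adj_some_same G x).mp hadj
          have hz'E : z' ∉ E j := fun h => hz ((hsome _ _ _).mpr h)
          have hzw := (hyP z').mp ⟨hadj', hz'E⟩
          subst hzw
          rfl
      · rintro rfl
        exact ⟨(adj_some_same G x).mpr ((hyP w).mpr rfl).1, hu⟩
  · calc D.card ≤ ∑ j, ((E j).image (bIota x j)).card := Finset.card_biUnion_le
      _ ≤ ∑ j, (E j).card := Finset.sum_le_sum (fun j _ => Finset.card_image_le)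
end upper

/-- for pairwise disjoint connected graphs `G₀, G₁, G₂` and the bouquet
`B(G₀,G₁,G₂)` obtained by identifying chosen vertices `x i ∈ V(G i)` into one vertex,
`γ_sp(G₀) + γ_sp(G₁) + γ_sp(G₂) - 2 ≤ γ_sp(B(G₀,G₁,G₂)) ≤ γ_sp(G₀) + γ_sp(G₁) + γ_sp(G₂)`. -/
theorem stmt_15 {V : Fin 3 → Type*} [∀ i, Fintype (V i)] [∀ i, DecidableEq (V i)]
    (G : ∀ i, SimpleGraph (V i)) (hG : ∀ i, (G i).Connected) (x : ∀ i, V i) :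
    superDominationNumber (G 0) + superDominationNumber (G 1) +
      superDominationNumber (G 2) - 2 ≤ superDominationNumber (bouquet G x) ∧
    superDominationNumber (bouquet G x) ≤
      superDominationNumber (G 0) + superDominationNumber (G 1) +
        superDominationNumber (G 2) := by
  classical
  constructor
  · -- lower bound
    obtain ⟨D, hD, hDcard⟩ := sdn_exists (bouquet G x)
    suffices h : superDominationNumber (G 0) + superDominationNumber (G 1) +
        superDominationNumber (G 2) ≤ D.card + 2 by omega
    set T : ∀ j : Fin 3, Finset (V j) := fun j => brTrace x D j with hT
    set A : Fin 3 → Finset (Option (Σ i : Fin 3, {v : V i // v ≠ x i})) :=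
      fun j => (T j).image (bIota x j) with hA
    have hAcard : ∀ j, (A j).card = (T j).card :=
      fun j => Finset.card_image_of_injective _ (bIota_injective x j)
    have hAsub : ∀ j, A j ⊆ D := by
      intro j w hw
      obtain ⟨v, hv, rfl⟩ := Finset.mem_image.mp hw
      exact (mem_brTrace x D).mp hv
    have hpair : ∀ (i j : Fin 3), i ≠ j → ∀ w, w ∈ A i → w ∈ A j → w = none := by
      intro i j hij w hwi hwj
      rcases w with _ | ⟨k, s⟩
      · rfl
      · obtain ⟨a, ha, hae⟩ := Finset.mem_image.mp hwi
        obtain ⟨b, hb, hbe⟩ := Finset.mem_image.mp hwj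
        exact absurd ((bIota_some_branch x hae).trans (bIota_some_branch x hbe).symm) hij
    have hUsub : A 0 ∪ A 1 ∪ A 2 ⊆ D := by
      intro w hw
      rcases Finset.mem_union.mp hw with hw | hw
      · rcases Finset.mem_union.mp hw with hw | hw
        · exact hAsub 0 hw
        · exact hAsub 1 hw
      · exact hAsub 2 hw
    by_cases hn : none ∈ D
    · have hγ : ∀ j, superDominationNumber (G j) ≤ (T j).card :=
        fun j => sdn_le (lower_sp_of_none_mem hD hn j)
      have hint01 : ((A 0) ∩ (A 1)).card ≤ 1 := by
        refine le_trans (Finset.card_le_card ?_) (le_of_eq (Finset.card_singleton none))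
        intro w hw
        obtain ⟨h1, h2⟩ := Finset.mem_inter.mp hw
        exact Finset.mem_singleton.mpr (hpair 0 1 (by decide) w h1 h2)
      have hint012 : ((A 0 ∪ A 1) ∩ (A 2)).card ≤ 1 := by
        refine le_trans (Finset.card_le_card ?_) (le_of_eq (Finset.card_singleton none))
        intro w hw
        obtain ⟨h1, h2⟩ := Finset.mem_inter.mp hw
        refine Finset.mem_singleton.mpr ?_
        rcases Finset.mem_union.mp h1 with h1 | h1
        · exact hpair 0 2 (by decide) w h1 h2
        · exact hpair 1 2 (by decide) w h1 h2
      have e1 := Finset.card_union_add_card_inter (A 0) (A 1)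
      have e2 := Finset.card_union_add_card_inter (A 0 ∪ A 1) (A 2)
      have e3 : (A 0 ∪ A 1 ∪ A 2).card ≤ D.card := Finset.card_le_card hUsub
      have h0 := hγ 0
      have h1 := hγ 1
      have h2 := hγ 2
      have c0 := hAcard 0
      have c1 := hAcard 1
      have c2 := hAcard 2
      omega
    · -- none ∉ D
      obtain ⟨w₀, hw₀D, hw₀P⟩ := hD.2 none hn
      match w₀, hw₀D, hw₀P with
      | none, hw₀D, hw₀P => exact absurd hw₀D hn
      | some ⟨i₀, ⟨y₀, hy₀⟩⟩, hw₀D, hw₀P =>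
        have hnoneA : ∀ j, none ∉ A j := by
          intro j h
          obtain ⟨a, ha, hae⟩ := Finset.mem_image.mp h
          have : a = x j := (bIota_eq_none_iff x).mp hae
          subst this
          exact hn ((x_mem_brTrace x D).mp ha)
        have hdisj01 : Disjoint (A 0) (A 1) := by
          rw [Finset.disjoint_left]
          intro w hw0 hw1
          exact hnoneA 0 ((hpair 0 1 (by decide) w hw0 hw1) ▸ hw0)
        have hdisj012 : Disjoint (A 0 ∪ A 1) (A 2) := by
          rw [Finset.disjoint_left]
          intro w hw01 hw2
          rcases Finset.mem_union.mp hw01 with hw | hw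
          · exact hnoneA 0 ((hpair 0 2 (by decide) w hw hw2) ▸ hw)
          · exact hnoneA 1 ((hpair 1 2 (by decide) w hw hw2) ▸ hw)
        have hsum : (A 0).card + (A 1).card + (A 2).card ≤ D.card := by
          have e1 := Finset.card_union_of_disjoint hdisj01
          have e2 := Finset.card_union_of_disjoint hdisj012
          have e3 : (A 0 ∪ A 1 ∪ A 2).card ≤ D.card := Finset.card_le_card hUsub
          omega
        have hins : ∀ j, superDominationNumber (G j) ≤ (T j).card + 1 := by
          intro j
          refine le_trans (sdn_le (lower_sp_insert hD hn j)) ?_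
          exact Finset.card_insert_le _ _
        have hspec : superDominationNumber (G i₀) ≤ (T i₀).card :=
          sdn_le (lower_sp_special hD hn hw₀D hw₀P)
        have hlt : ∑ j : Fin 3, superDominationNumber (G j) <
            ∑ j : Fin 3, ((T j).card + 1) := by
          refine Finset.sum_lt_sum (fun i _ => hins i) ⟨i₀, Finset.mem_univ i₀, ?_⟩
          omega
        rw [Fin.sum_univ_three, Fin.sum_univ_three] at hlt
        have c0 := hAcard 0
        have c1 := hAcard 1
        have c2 := hAcard 2
        omega
  · -- upper bound
    choose E hsp hcard hgood using fun j => exists_good_sp (G j) (x j)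
    obtain ⟨D, hDsp, hDle⟩ := upper_bound G x E hsp hgood 0
    have h1 := sdn_le hDsp
    rw [Fin.sum_univ_three, hcard 0, hcard 1, hcard 2] at hDle
    omega
end

section
/- The lower bound in the bouquet inequality is sharp: the bouquet of n copies of the friendship graph F_2 at their centers is F_{2n}, and γ_sp(F_{2n}) = 2n+1 = (Σ_{i=1}^n γ_sp(F_2)) − n + 1 (using γ_sp(F_2) = 3). -/
/-- The friendship graph `F_n`: `n` triangles sharing the common center `none`. -/
def friendshipGraph (n : ℕ) : SimpleGraph (Option (Fin n × Fin 2)) :=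
  SimpleGraph.fromRel (fun u w =>
    u = none ∨ ∃ p q : Fin n × Fin 2, u = some p ∧ w = some q ∧ p.1 = q.1)

/-!
A super dominating set `S` assigns to every `u ∉ S` a vertex of `S` whose only neighbour outside
`S` is `u`; this assignment is injective, so `|V| ≤ 2 |S|`. In `F_k`, with `2k + 1` vertices,
the center together with one vertex of each triangle is super dominating, whence
`γ_sp(F_k) = k + 1`. Gluing `n` copies of `F_m` at their centers gives `F_{nm}`, and `γ_sp` is
invariant under isomorphism.
-/

open Finset

namespace IsSuperDominatingSet

variable {V W : Type*} {G : SimpleGraph V} {S : Finset V}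

theorem univ [Fintype V] : IsSuperDominatingSet G Finset.univ :=
  ⟨fun u hu => absurd (mem_univ u) hu, fun u hu => absurd (mem_univ u) hu⟩

theorem card_compl_le [Fintype V] [DecidableEq V] (h : IsSuperDominatingSet G S) :
    Sᶜ.card ≤ S.card := by
  choose f hfS hf using h.2
  refine card_le_card_of_injOn (fun u => if hu : u ∉ S then f u hu else u) ?_ ?_
  · intro u hu
    have hu : u ∉ S := by simpa using hu
    simp [hu, hfS u hu]
  · intro u hu u' hu' heq
    have hu : u ∉ S := by simpa using hu
    have hu' : u' ∉ S := by simpa using hu'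
    simp only [dif_pos hu, dif_pos hu'] at heq
    exact (hf u' hu' u).mp (heq ▸ (hf u hu u).mpr rfl)

theorem card_le_two_mul_card [Fintype V] (h : IsSuperDominatingSet G S) :
    Fintype.card V ≤ 2 * S.card := by
  classical
  have := card_add_card_compl S
  have := h.card_compl_le
  omega

theorem map {G' : SimpleGraph W} (e : G ≃g G') (h : IsSuperDominatingSet G S) :
    IsSuperDominatingSet G' (S.map e.toEquiv.toEmbedding) := by
  have hadj : ∀ v w, G'.Adj (e v) w ↔ G.Adj v (e.symm w) := fun v w => by
    rw [← e.map_rel_iff, RelIso.apply_symm_apply]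
  refine ⟨fun u hu => ?_, fun u hu => ?_⟩
  · rw [mem_map_equiv] at hu
    obtain ⟨v, hv, hvu⟩ := h.1 _ hu
    exact ⟨e v, mem_map_of_mem _ hv, (hadj v u).mpr hvu⟩
  · rw [mem_map_equiv] at hu
    obtain ⟨v, hv, hvu⟩ := h.2 _ hu
    refine ⟨e v, mem_map_of_mem _ hv, fun w => ?_⟩
    rw [hadj, mem_map_equiv]
    exact (hvu _).trans e.symm.injective.eq_iff

end IsSuperDominatingSet

theorem superDominationNumber_le {V : Type*} [Fintype V] {G : SimpleGraph V} {S : Finset V}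
    (h : IsSuperDominatingSet G S) : superDominationNumber G ≤ S.card :=
  Nat.sInf_le ⟨S, h, rfl⟩

theorem exists_isSuperDominatingSet_card_eq {V : Type*} [Fintype V] (G : SimpleGraph V) :
    ∃ S : Finset V, IsSuperDominatingSet G S ∧ S.card = superDominationNumber G :=
  Nat.sInf_mem (s := {n | ∃ S : Finset V, IsSuperDominatingSet G S ∧ S.card = n})
    ⟨_, _, IsSuperDominatingSet.univ, rfl⟩

theorem card_le_two_mul_superDominationNumber {V : Type*} [Fintype V] (G : SimpleGraph V) :
    Fintype.card V ≤ 2 * superDominationNumber G := by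
  obtain ⟨S, hS, hcard⟩ := exists_isSuperDominatingSet_card_eq G
  exact hcard ▸ hS.card_le_two_mul_card

theorem superDominationNumber_le_of_iso {V W : Type*} [Fintype V] [Fintype W]
    {G : SimpleGraph V} {G' : SimpleGraph W} (e : G ≃g G') :
    superDominationNumber G' ≤ superDominationNumber G := by
  obtain ⟨S, hS, hcard⟩ := exists_isSuperDominatingSet_card_eq G
  simpa [hcard] using superDominationNumber_le (hS.map e)

theorem superDominationNumber_congr {V W : Type*} [Fintype V] [Fintype W]
    {G : SimpleGraph V} {G' : SimpleGraph W} (e : G ≃g G') :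
    superDominationNumber G = superDominationNumber G' :=
  le_antisymm (superDominationNumber_le_of_iso e.symm) (superDominationNumber_le_of_iso e)

section friendshipGraph

variable {k : ℕ}

@[simp]
theorem friendshipGraph_adj_none_some (p : Fin k × Fin 2) :
    (friendshipGraph k).Adj none (some p) := by
  simp [friendshipGraph]

@[simp]
theorem friendshipGraph_adj_some_some (p q : Fin k × Fin 2) :
    (friendshipGraph k).Adj (some p) (some q) ↔ p ≠ q ∧ p.1 = q.1 := by
  simp only [friendshipGraph, SimpleGraph.fromRel_adj, reduceCtorEq, Option.some.injEq,
    exists_and_left, exists_eq_left', false_or, ne_eq]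
  grind

variable (k) in
def friendshipSuperDominatingSet : Finset (Option (Fin k × Fin 2)) :=
  insert none (univ.image fun i => some (i, 0))

@[simp]
theorem none_mem_friendshipSuperDominatingSet : none ∈ friendshipSuperDominatingSet k :=
  mem_insert_self _ _

@[simp]
theorem some_mem_friendshipSuperDominatingSet {p : Fin k × Fin 2} :
    some p ∈ friendshipSuperDominatingSet k ↔ p.2 = 0 := by
  simp [friendshipSuperDominatingSet, Prod.ext_iff, eq_comm]

theorem card_friendshipSuperDominatingSet : (friendshipSuperDominatingSet k).card = k + 1 := by
  rw [friendshipSuperDominatingSet, card_insert_of_notMem (by simp),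
    card_image_of_injective _ fun i j hij => by simpa using hij, card_univ, Fintype.card_fin]

theorem isSuperDominatingSet_friendshipSuperDominatingSet :
    IsSuperDominatingSet (friendshipGraph k) (friendshipSuperDominatingSet k) := by
  refine ⟨fun u hu => ?_, fun u hu => ?_⟩ <;>
    obtain _ | p := u <;> simp only [none_mem_friendshipSuperDominatingSet,
      not_true_eq_false, some_mem_friendshipSuperDominatingSet] at hu
  · exact ⟨none, by simp, by simp⟩
  · refine ⟨some (p.1, 0), by simp, fun w => ?_⟩
    obtain _ | q := w
    · simp
    · simp only [friendshipGraph_adj_some_some, some_mem_friendshipSuperDominatingSet,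
        Option.some.injEq, ne_eq, Prod.ext_iff]
      omega

variable (k) in
theorem superDominationNumber_friendshipGraph :
    superDominationNumber (friendshipGraph k) = k + 1 := by
  refine le_antisymm ?_ ?_
  · exact card_friendshipSuperDominatingSet ▸
      superDominationNumber_le isSuperDominatingSet_friendshipSuperDominatingSet
  · have := card_le_two_mul_superDominationNumber (friendshipGraph k)
    simp only [Fintype.card_option, Fintype.card_prod, Fintype.card_fin] at this
    omega

end friendshipGraph

section bouquet

variable {n : ℕ} {V : Fin n → Type*} {G : ∀ i, SimpleGraph (V i)} {x : ∀ i, V i}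

@[simp]
theorem bouquet_adj_none_some (b : Σ i, {v : V i // v ≠ x i}) :
    (bouquet G x).Adj none (some b) ↔ (G b.1).Adj (x b.1) b.2 := by
  simp only [bouquet, SimpleGraph.fromRel_adj]
  grind

theorem bouquet_adj_some_some_same {i : Fin n} (v w : {v : V i // v ≠ x i}) :
    (bouquet G x).Adj (some ⟨i, v⟩) (some ⟨i, w⟩) ↔ (G i).Adj v w := by
  simpa [bouquet, (G i).adj_comm w] using fun h => Subtype.ext_iff.not.mpr h.ne

theorem bouquet_not_adj_some_some {i j : Fin n} (hij : i ≠ j) (v : {v : V i // v ≠ x i})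
    (w : {v : V j // v ≠ x j}) : ¬ (bouquet G x).Adj (some ⟨i, v⟩) (some ⟨j, w⟩) := by
  simp [bouquet, hij, hij.symm]

end bouquet

section bouquetFriendship

variable {n m k : ℕ} (e : Fin n × Fin m ≃ Fin k)

def bouquetFriendshipEquiv :
    Option (Σ _ : Fin n, {v : Option (Fin m × Fin 2) // v ≠ none}) ≃
      Option (Fin k × Fin 2) where
  toFun
    | none => none
    | some ⟨_, none, h⟩ => absurd rfl h
    | some ⟨i, some (a, b), _⟩ => some (e (i, a), b)
  invFun
    | none => none
    | some (t, b) => some ⟨(e.symm t).1, some ((e.symm t).2, b), Option.some_ne_none _⟩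
  left_inv := by rintro (_ | ⟨i, _ | ⟨a, b⟩, h⟩) <;> first | contradiction | simp
  right_inv := by rintro (_ | ⟨t, b⟩) <;> simp

def bouquetFriendshipIso :
    bouquet (fun _ : Fin n => friendshipGraph m) (fun _ => none) ≃g friendshipGraph k where
  toEquiv := bouquetFriendshipEquiv e
  map_rel_iff' := by
    rintro (_ | ⟨i, _ | ⟨a, b⟩, hv⟩) (_ | ⟨j, _ | ⟨c, d⟩, hw⟩) <;> try contradiction
    · simp [bouquetFriendshipEquiv]
    · simp [bouquetFriendshipEquiv]
    · simp [bouquetFriendshipEquiv, SimpleGraph.adj_comm _ (some _) none]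
    · obtain rfl | hij := eq_or_ne i j
      · simp [bouquetFriendshipEquiv, bouquet_adj_some_some_same]
      · simp [bouquetFriendshipEquiv, bouquet_not_adj_some_some hij, hij]

end bouquetFriendship

theorem stmt_17_general (n : ℕ) :
    Nonempty (bouquet (fun _ : Fin n => friendshipGraph 2) (fun _ => none) ≃g
      friendshipGraph (2 * n)) ∧
    superDominationNumber (friendshipGraph 2) = 3 ∧
    superDominationNumber (friendshipGraph (2 * n)) = 2 * n + 1 ∧
    superDominationNumber
        (bouquet (fun _ : Fin n => friendshipGraph 2) (fun _ => none)) =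
      (∑ _i : Fin n, superDominationNumber (friendshipGraph 2)) - n + 1 := by
  let iso := bouquetFriendshipIso (finProdFinEquiv.trans (finCongr (Nat.mul_comm n 2)))
  refine ⟨⟨iso⟩, superDominationNumber_friendshipGraph 2,
    superDominationNumber_friendshipGraph (2 * n), ?_⟩
  rw [superDominationNumber_congr iso, superDominationNumber_friendshipGraph,
    superDominationNumber_friendshipGraph, sum_const, card_univ, Fintype.card_fin, smul_eq_mul]
  omega

/-- sharpness of the lower bound for bouquets: the bouquet of `n`
copies of `F₂` at their centers is `F_{2n}`, and
`γ_sp(F_{2n}) = 2n + 1 = (Σᵢ γ_sp(F₂)) - n + 1` (using `γ_sp(F₂) = 3`). -/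
theorem stmt_17 (n : ℕ) (hn : 1 ≤ n) :
    Nonempty (bouquet (fun _ : Fin n => friendshipGraph 2) (fun _ => none) ≃g
      friendshipGraph (2 * n)) ∧
    superDominationNumber (friendshipGraph 2) = 3 ∧
    superDominationNumber (friendshipGraph (2 * n)) = 2 * n + 1 ∧
    superDominationNumber
        (bouquet (fun _ : Fin n => friendshipGraph 2) (fun _ => none)) =
      (∑ _i : Fin n, superDominationNumber (friendshipGraph 2)) - n + 1 :=
  stmt_17_general n
end
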